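/- Let (x(·),p(·),u(·)) be a normal BC-extremal on [0,t_f], i.e. an extremal such that ⟨p(t), F₀(x(t)) + u(t)F₁(x(t))⟩ = 1 for a.e. t, with transversality condition p(t_f) = (0, p₂, 0) and x₃(t_f) > 0. Then p₂ = 1/(c₃x₃(t_f)) > 0, and at every time τ with p₁(τ) = p₃(τ) = 0 (a fold point) the second derivative of the switching function equals Φ̈(τ) = H₀₀₁(x(τ),p(τ)) = c₃c₅c₇p₂ > 0. -/

import Mathlib

open MeasureTheory

noncomputable section

/-- Lie bracket of vector fields on ℝ³: `[F,G](x) = G'(x)F(x) − F'(x)G(x)`. -/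
def lieBracket (F G : (Fin 3 → ℝ) → (Fin 3 → ℝ)) (x : Fin 3 → ℝ) : Fin 3 → ℝ :=
  fderiv ℝ G x (F x) - fderiv ℝ F x (G x)

/-- Drift vector field of the electric vehicle. -/
def F0 (c1 c2 c3 c4 c5 c6 : ℝ) (x : Fin 3 → ℝ) : Fin 3 → ℝ :=
  ![c1 * x 0 + c2 * x 2, c3 * x 2, c4 + c5 * x 0 + c6 * (x 2) ^ 2]

/-- Control vector field of the electric vehicle. -/
def F1 (c7 : ℝ) (_x : Fin 3 → ℝ) : Fin 3 → ℝ := ![c7, 0, 0]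

/-- An extremal of the minimum time problem on `[0, t_f]`: a measurable control
`u` with values in `[-1,1]`, together with an absolutely continuous pair
`(x, p)` (encoded by the integral form of the Hamiltonian ODE) with nonvanishing
adjoint vector, satisfying the maximization condition
`u(t) Φ(t) = |Φ(t)|` a.e., where `Φ(t) = c₇ p₁(t)` is the switching function. -/
structure IsExtremal (c1 c2 c3 c4 c5 c6 c7 tf : ℝ)
    (x p : ℝ → Fin 3 → ℝ) (u : ℝ → ℝ) : Prop where
  measurable_u : Measurable u
  u_mem : ∀ᵐ t ∂(volume.restrict (Set.Icc (0:ℝ) tf)), u t ∈ Set.Icc (-1:ℝ) 1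
  p_ne : ∀ t ∈ Set.Icc (0:ℝ) tf, p t ≠ 0
  cont_x : ContinuousOn x (Set.Icc (0:ℝ) tf)
  cont_p : ContinuousOn p (Set.Icc (0:ℝ) tf)
  ode_x1 : ∀ t ∈ Set.Icc (0:ℝ) tf,
    x t 0 = x 0 0 + ∫ s in (0:ℝ)..t, (c1 * x s 0 + c2 * x s 2 + u s * c7)
  ode_x2 : ∀ t ∈ Set.Icc (0:ℝ) tf,
    x t 1 = x 0 1 + ∫ s in (0:ℝ)..t, (c3 * x s 2)
  ode_x3 : ∀ t ∈ Set.Icc (0:ℝ) tf,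
    x t 2 = x 0 2 + ∫ s in (0:ℝ)..t, (c4 + c5 * x s 0 + c6 * (x s 2) ^ 2)
  ode_p1 : ∀ t ∈ Set.Icc (0:ℝ) tf,
    p t 0 = p 0 0 + ∫ s in (0:ℝ)..t, (-(c1 * p s 0 + c5 * p s 2))
  ode_p2 : ∀ t ∈ Set.Icc (0:ℝ) tf, p t 1 = p 0 1
  ode_p3 : ∀ t ∈ Set.Icc (0:ℝ) tf,
    p t 2 = p 0 2 + ∫ s in (0:ℝ)..t, (-(c2 * p s 0 + c3 * p s 1 + 2 * c6 * x s 2 * p s 2))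
  maximization : ∀ᵐ t ∂(volume.restrict (Set.Icc (0:ℝ) tf)),
    u t * (c7 * p t 0) = |c7 * p t 0|

/-! The Hamiltonian `⟨p, F₀(x)⟩ + u ⟨p, F₁(x)⟩` equals, by the maximization condition, the
continuous function `⟨p, F₀(x)⟩ + |c₇ p₁|` of `(x, p)` almost everywhere. Being `1` a.e. on
`[0, t_f]`, it is `1` everywhere there, in particular at `t_f`, where transversality reduces it
to `c₃ x₃(t_f) p₂`. Since `ṗ₂ = 0`, `p₂(τ) = p₂` at every time; and `F₁` is constant while `F₀`
is affine in `x₁`, so at a fold point only the middle component `c₃c₅c₇` of `F₀₀₁` survives. -/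

lemma lieBracket_const_right (F : (Fin 3 → ℝ) → (Fin 3 → ℝ)) (v x : Fin 3 → ℝ) :
    lieBracket F (fun _ => v) x = -fderiv ℝ F x v := by
  simp [lieBracket]

section ElectricVehicle

variable (c1 c2 c3 c4 c5 c6 c7 : ℝ)

def jacobianF0 (x : Fin 3 → ℝ) : Matrix (Fin 3) (Fin 3) ℝ :=
  !![c1, 0, c2; 0, 0, c3; c5, 0, 2 * c6 * x 2]

lemma hasFDerivAt_F0 (x : Fin 3 → ℝ) :
    HasFDerivAt (F0 c1 c2 c3 c4 c5 c6)
      (Matrix.toLin' (jacobianF0 c1 c2 c3 c5 c6 x)).toContinuousLinearMap x := by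
  have hx0 : HasFDerivAt (fun y : Fin 3 → ℝ => y 0) (ContinuousLinearMap.proj (R := ℝ) 0) x :=
    hasFDerivAt_apply 0 x
  have hx2 : HasFDerivAt (fun y : Fin 3 → ℝ => y 2) (ContinuousLinearMap.proj (R := ℝ) 2) x :=
    hasFDerivAt_apply 2 x
  refine hasFDerivAt_pi'.2 fun i => ?_
  fin_cases i
  · convert (hx0.const_mul c1).add (hx2.const_mul c2) using 1 <;> ext <;>
      simp [F0, jacobianF0, dotProduct, Fin.sum_univ_three]
  · convert hx2.const_mul c3 using 1 <;> ext <;>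
      simp [F0, jacobianF0, dotProduct, Fin.sum_univ_three]
  · convert ((hasFDerivAt_const c4 x).add (hx0.const_mul c5)).add ((hx2.pow 2).const_mul c6)
      using 1 <;> ext <;> simp [F0, jacobianF0, dotProduct, Fin.sum_univ_three]
    ring

lemma fderiv_F0_apply (x v : Fin 3 → ℝ) :
    fderiv ℝ (F0 c1 c2 c3 c4 c5 c6) x v = (jacobianF0 c1 c2 c3 c5 c6 x).mulVec v := by
  rw [(hasFDerivAt_F0 c1 c2 c3 c4 c5 c6 x).fderiv]
  rfl

lemma continuous_F0 : Continuous (F0 c1 c2 c3 c4 c5 c6) :=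
  Differentiable.continuous fun x => (hasFDerivAt_F0 c1 c2 c3 c4 c5 c6 x).differentiableAt

lemma lieBracket_F0_F1 :
    lieBracket (F0 c1 c2 c3 c4 c5 c6) (F1 c7) = fun _ => ![-(c1 * c7), 0, -(c5 * c7)] := by
  funext x
  unfold F1
  rw [lieBracket_const_right, fderiv_F0_apply]
  ext i
  fin_cases i <;> simp [jacobianF0] <;> ring

lemma lieBracket_F0_lieBracket_F0_F1 (x : Fin 3 → ℝ) :
    lieBracket (F0 c1 c2 c3 c4 c5 c6) (lieBracket (F0 c1 c2 c3 c4 c5 c6) (F1 c7)) x =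
      ![c1 * c1 * c7 + c2 * c5 * c7, c3 * c5 * c7, c1 * c5 * c7 + 2 * c6 * x 2 * c5 * c7] := by
  rw [lieBracket_F0_F1, lieBracket_const_right, fderiv_F0_apply]
  ext i
  fin_cases i <;> simp [jacobianF0] <;> ring

lemma sum_mul_lieBracket_F0_lieBracket_F0_F1_of_fold (x q : Fin 3 → ℝ)
    (hq0 : q 0 = 0) (hq2 : q 2 = 0) :
    ∑ i, q i * lieBracket (F0 c1 c2 c3 c4 c5 c6)
        (lieBracket (F0 c1 c2 c3 c4 c5 c6) (F1 c7)) x i = c3 * c5 * c7 * q 1 := by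
  rw [lieBracket_F0_lieBracket_F0_F1, Fin.sum_univ_three, hq0, hq2]
  simp [mul_comm]

def maxHamiltonian (x q : Fin 3 → ℝ) : ℝ :=
  ∑ i, q i * F0 c1 c2 c3 c4 c5 c6 x i + |c7 * q 0|

lemma continuous_maxHamiltonian :
    Continuous fun z : (Fin 3 → ℝ) × (Fin 3 → ℝ) =>
      maxHamiltonian c1 c2 c3 c4 c5 c6 c7 z.1 z.2 := by
  have := continuous_F0 c1 c2 c3 c4 c5 c6
  unfold maxHamiltonian
  fun_prop

lemma hamiltonian_eq_maxHamiltonian {x q : Fin 3 → ℝ} {u : ℝ}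
    (hmax : u * (c7 * q 0) = |c7 * q 0|) :
    ∑ i, q i * (F0 c1 c2 c3 c4 c5 c6 x i + u * F1 c7 x i) =
      maxHamiltonian c1 c2 c3 c4 c5 c6 c7 x q := by
  simp only [maxHamiltonian, ← hmax, F1, Fin.sum_univ_three, Matrix.cons_val_zero,
    Matrix.cons_val_one, Matrix.cons_val, mul_zero, add_zero]
  ring

lemma maxHamiltonian_transversal (x : Fin 3 → ℝ) (p2 : ℝ) :
    maxHamiltonian c1 c2 c3 c4 c5 c6 c7 x ![0, p2, 0] = p2 * (c3 * x 2) := by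
  simp [maxHamiltonian, F0, Fin.sum_univ_three]

end ElectricVehicle

lemma IsExtremal.maxHamiltonian_eq_one {c1 c2 c3 c4 c5 c6 c7 tf : ℝ}
    {x p : ℝ → Fin 3 → ℝ} {u : ℝ → ℝ} (hext : IsExtremal c1 c2 c3 c4 c5 c6 c7 tf x p u)
    (htf : 0 < tf)
    (hnormal : ∀ᵐ t ∂(volume.restrict (Set.Icc (0:ℝ) tf)),
      ∑ i, p t i * (F0 c1 c2 c3 c4 c5 c6 (x t) i + u t * F1 c7 (x t) i) = 1) :
    ∀ t ∈ Set.Icc (0:ℝ) tf, maxHamiltonian c1 c2 c3 c4 c5 c6 c7 (x t) (p t) = 1 := by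
  have hcont : ContinuousOn (fun t => maxHamiltonian c1 c2 c3 c4 c5 c6 c7 (x t) (p t))
      (Set.Icc 0 tf) :=
    (continuous_maxHamiltonian c1 c2 c3 c4 c5 c6 c7).comp_continuousOn
      (hext.cont_x.prodMk hext.cont_p)
  refine Measure.eqOn_Icc_of_ae_eq volume htf.ne ?_ hcont continuousOn_const
  filter_upwards [hnormal, hext.maximization] with t hlevel hmax
  rwa [← hamiltonian_eq_maxHamiltonian c1 c2 c3 c4 c5 c6 c7 hmax]

theorem stmt11_general (c1 c2 c3 c4 c5 c6 c7 tf : ℝ)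
    (h3 : 0 < c3) (h5 : 0 < c5) (h7 : 0 < c7) (htf : 0 < tf)
    (x p : ℝ → Fin 3 → ℝ) (u : ℝ → ℝ)
    (hext : IsExtremal c1 c2 c3 c4 c5 c6 c7 tf x p u)
    (hnormal : ∀ᵐ t ∂(volume.restrict (Set.Icc (0:ℝ) tf)),
      ∑ i, p t i * (F0 c1 c2 c3 c4 c5 c6 (x t) i + u t * F1 c7 (x t) i) = 1)
    (p2 : ℝ) (htrans : p tf = ![0, p2, 0]) (hx3 : 0 < x tf 2) :
    p2 = 1 / (c3 * x tf 2) ∧ 0 < p2 ∧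
    ∀ τ ∈ Set.Icc (0:ℝ) tf, p τ 0 = 0 → p τ 2 = 0 →
      (∑ i, p τ i *
          lieBracket (F0 c1 c2 c3 c4 c5 c6)
            (lieBracket (F0 c1 c2 c3 c4 c5 c6) (F1 c7)) (x τ) i)
        = c3 * c5 * c7 * p2 ∧
      0 < c3 * c5 * c7 * p2 := by
  have htf_mem : tf ∈ Set.Icc (0:ℝ) tf := ⟨htf.le, le_rfl⟩
  have hlevel : p2 * (c3 * x tf 2) = 1 := by
    rw [← maxHamiltonian_transversal c1 c2 c3 c4 c5 c6 c7, ← htrans]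
    exact hext.maxHamiltonian_eq_one htf hnormal tf htf_mem
  have hp2 : p2 = 1 / (c3 * x tf 2) := eq_one_div_of_mul_eq_one_left hlevel
  have hp2_pos : 0 < p2 := hp2 ▸ by positivity
  refine ⟨hp2, hp2_pos, fun τ hτ hτ0 hτ2 => ⟨?_, by positivity⟩⟩
  have hτ1 : p τ 1 = p2 := by
    rw [hext.ode_p2 τ hτ, ← hext.ode_p2 tf htf_mem, htrans]
    rfl
  rw [sum_mul_lieBracket_F0_lieBracket_F0_F1_of_fold c1 c2 c3 c4 c5 c6 c7 _ _ hτ0 hτ2, hτ1]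

/-- For a normal BC-extremal (Hamiltonian level 1 a.e., transversality
`p(t_f) = (0, p₂, 0)`, `x₃(t_f) > 0`) one has `p₂ = 1/(c₃ x₃(t_f)) > 0`, and at
every fold time `τ` (`p₁(τ) = p₃(τ) = 0`) the second derivative of the
switching function equals `H₀₀₁(x(τ),p(τ)) = c₃c₅c₇ p₂ > 0`. -/
theorem stmt11 (c1 c2 c3 c4 c5 c6 c7 tf : ℝ)
    (h1 : c1 < 0) (h2 : c2 < 0) (h3 : 0 < c3) (h4 : c4 < 0)
    (h5 : 0 < c5) (h6 : c6 < 0) (h7 : 0 < c7) (htf : 0 < tf)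
    (x p : ℝ → Fin 3 → ℝ) (u : ℝ → ℝ)
    (hext : IsExtremal c1 c2 c3 c4 c5 c6 c7 tf x p u)
    (hnormal : ∀ᵐ t ∂(volume.restrict (Set.Icc (0:ℝ) tf)),
      ∑ i, p t i * (F0 c1 c2 c3 c4 c5 c6 (x t) i + u t * F1 c7 (x t) i) = 1)
    (p2 : ℝ) (htrans : p tf = ![0, p2, 0]) (hx3 : 0 < x tf 2) :
    p2 = 1 / (c3 * x tf 2) ∧ 0 < p2 ∧
    ∀ τ ∈ Set.Icc (0:ℝ) tf, p τ 0 = 0 → p τ 2 = 0 →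
      (∑ i, p τ i *
          lieBracket (F0 c1 c2 c3 c4 c5 c6)
            (lieBracket (F0 c1 c2 c3 c4 c5 c6) (F1 c7)) (x τ) i)
        = c3 * c5 * c7 * p2 ∧
      0 < c3 * c5 * c7 * p2 :=
  stmt11_general c1 c2 c3 c4 c5 c6 c7 tf h3 h5 h7 htf x p u hext hnormal p2 htrans hx3
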